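/- For the spherical p-rotation F_p(ℓ,θ) = 2 arctan(Ψ(ℓ,θ)/(cos(θ/2)cos(ℓ/2))) · (1/Ψ(ℓ,θ)) · sin^p(θ/2)/(cos(θ/2) sin(ℓ/2))^{p−1} with Ψ(ℓ,θ) = √(sin²(ℓ/2)+sin²(θ/2)cos²(ℓ/2)), one has the asymptotics F_p(ℓ,θ) / (θ^p ℓ^{1−p}) → 1 as (ℓ,θ) → (0,0) with ℓ, θ > 0. -/
import Mathlib


/-- `Ψ(ℓ,θ) = √(sin²(ℓ/2) + sin²(θ/2)cos²(ℓ/2))`. -/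
noncomputable def psiFun (ℓ θ : ℝ) : ℝ :=
  Real.sqrt (Real.sin (ℓ / 2) ^ 2 + Real.sin (θ / 2) ^ 2 * Real.cos (ℓ / 2) ^ 2)

/-- The spherical `p`-rotation contribution of one vertex with turning angle `θ`
and edge length `ℓ`. -/
noncomputable def sphericalF (p ℓ θ : ℝ) : ℝ :=
  2 * Real.arctan (psiFun ℓ θ / (Real.cos (θ / 2) * Real.cos (ℓ / 2))) *
    (1 / psiFun ℓ θ) *
    (Real.sin (θ / 2) ^ p / (Real.cos (θ / 2) * Real.sin (ℓ / 2)) ^ (p - 1))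

open Real Filter Topology

private lemma slope_tendsto_one_aux {f : ℝ → ℝ} (hf : HasDerivAt f 1 0) (h0 : f 0 = 0) :
    Tendsto (fun t : ℝ => f t / t) (𝓝[≠] 0) (𝓝 1) := by
  have h := hasDerivAt_iff_tendsto_slope.mp hf
  refine h.congr' ?_
  filter_upwards [self_mem_nhdsWithin] with t ht
  simp [slope_def_field, h0]

private lemma tendsto_arctan_div_self' :
    Tendsto (fun t : ℝ => Real.arctan t / t) (𝓝[≠] 0) (𝓝 1) := by
  have h : HasDerivAt Real.arctan 1 0 := by simpa using Real.hasDerivAt_arctan 0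
  exact slope_tendsto_one_aux h Real.arctan_zero

private lemma tendsto_sin_div_self' :
    Tendsto (fun t : ℝ => Real.sin t / t) (𝓝[≠] 0) (𝓝 1) := by
  have h : HasDerivAt Real.sin 1 0 := by simpa using Real.hasDerivAt_sin 0
  exact slope_tendsto_one_aux h Real.sin_zero

/-- Asymptotics of the spherical `p`-rotation: `F_p(ℓ,θ)/(θ^p ℓ^{1−p}) → 1` as
`(ℓ,θ) → (0,0)` with `ℓ, θ > 0`. -/
theorem sphericalF_asymptotics (p : ℝ) (hp : 1 ≤ p) :
    Filter.Tendsto (fun q : ℝ × ℝ => sphericalF p q.1 q.2 / (q.2 ^ p * q.1 ^ (1 - p)))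
      (nhdsWithin (0, 0) {q : ℝ × ℝ | 0 < q.1 ∧ 0 < q.2}) (nhds 1) := by
  set L := nhdsWithin ((0, 0) : ℝ × ℝ) {q : ℝ × ℝ | 0 < q.1 ∧ 0 < q.2} with hLdef
  have hfst : Tendsto (fun q : ℝ × ℝ => q.1) L (𝓝 0) :=
    (continuous_fst.tendsto _).mono_left nhdsWithin_le_nhds
  have hsnd : Tendsto (fun q : ℝ × ℝ => q.2) L (𝓝 0) :=
    (continuous_snd.tendsto _).mono_left nhdsWithin_le_nhds
  have hmem : ∀ᶠ q : ℝ × ℝ in L, 0 < q.1 ∧ 0 < q.2 := self_mem_nhdsWithin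
  have hsmall : ∀ᶠ q : ℝ × ℝ in L, q.1 < 1 ∧ q.2 < 1 :=
    (hfst.eventually (eventually_lt_nhds one_pos)).and
      (hsnd.eventually (eventually_lt_nhds one_pos))
  -- basic positivity facts, eventually
  have hpos : ∀ᶠ q : ℝ × ℝ in L,
      0 < Real.sin (q.2 / 2) ∧ 0 < Real.cos (q.2 / 2) ∧ 0 < Real.sin (q.1 / 2) ∧
        0 < Real.cos (q.1 / 2) ∧ 0 < psiFun q.1 q.2 := by
    filter_upwards [hmem, hsmall] with q hq hq1
    obtain ⟨hℓ, hθ⟩ := hq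
    obtain ⟨hℓ1, hθ1⟩ := hq1
    have hπ := Real.pi_gt_three
    have ha : 0 < Real.sin (q.2 / 2) :=
      Real.sin_pos_of_pos_of_lt_pi (by linarith) (by linarith)
    have hb : 0 < Real.cos (q.2 / 2) :=
      Real.cos_pos_of_mem_Ioo ⟨by linarith, by linarith⟩
    have hc : 0 < Real.sin (q.1 / 2) :=
      Real.sin_pos_of_pos_of_lt_pi (by linarith) (by linarith)
    have hd : 0 < Real.cos (q.1 / 2) :=
      Real.cos_pos_of_mem_Ioo ⟨by linarith, by linarith⟩
    refine ⟨ha, hb, hc, hd, ?_⟩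
    exact Real.sqrt_pos.mpr (by positivity)
  -- x := Ψ/(cos(θ/2)·cos(ℓ/2)) tends to 0, and is eventually positive
  set x : ℝ × ℝ → ℝ := fun q => psiFun q.1 q.2 / (Real.cos (q.2 / 2) * Real.cos (q.1 / 2))
    with hxdef
  have hx_cont : ContinuousAt x ((0, 0) : ℝ × ℝ) := by
    apply ContinuousAt.div
    · apply Continuous.continuousAt
      unfold psiFun
      fun_prop
    · fun_prop
    · norm_num
  have hx0 : Tendsto x L (𝓝 0) := by
    have h := hx_cont.tendsto.mono_left
      (nhdsWithin_le_nhds (s := {q : ℝ × ℝ | 0 < q.1 ∧ 0 < q.2}))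
    have hx00 : x ((0, 0) : ℝ × ℝ) = 0 := by simp [hxdef, psiFun]
    rwa [hx00] at h
  have hxpos : ∀ᶠ q in L, x q ≠ 0 := by
    filter_upwards [hpos] with q hq
    exact (div_pos hq.2.2.2.2 (mul_pos hq.2.1 hq.2.2.2.1)).ne'
  have hx' : Tendsto x L (𝓝[≠] 0) := tendsto_nhdsWithin_iff.mpr ⟨hx0, hxpos⟩
  have h_arctan : Tendsto (fun q => Real.arctan (x q) / x q) L (𝓝 1) :=
    tendsto_arctan_div_self'.comp hx'
  -- (cos(θ/2)·cos(ℓ/2))⁻¹ → 1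
  have hcc : Tendsto (fun q : ℝ × ℝ => (Real.cos (q.2 / 2) * Real.cos (q.1 / 2))⁻¹)
      L (𝓝 1) := by
    have hc : ContinuousAt (fun q : ℝ × ℝ => (Real.cos (q.2 / 2) * Real.cos (q.1 / 2))⁻¹)
        ((0, 0) : ℝ × ℝ) := by
      apply ContinuousAt.inv₀
      · fun_prop
      · norm_num
    have h := hc.tendsto.mono_left
      (nhdsWithin_le_nhds (s := {q : ℝ × ℝ | 0 < q.1 ∧ 0 < q.2}))
    simpa using h
  -- sin(θ/2)/θ → 1/2
  have hhalfθ : Tendsto (fun q : ℝ × ℝ => q.2 / 2) L (𝓝[≠] 0) := by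
    refine tendsto_nhdsWithin_iff.mpr ⟨by simpa using hsnd.div_const 2, ?_⟩
    filter_upwards [hmem] with q hq
    have h : (0:ℝ) < q.2 / 2 := by linarith [hq.2]
    exact h.ne'
  have hsθ : Tendsto (fun q : ℝ × ℝ => Real.sin (q.2 / 2) / q.2) L (𝓝 (1 / 2)) := by
    have h1 : Tendsto (fun q : ℝ × ℝ => Real.sin (q.2 / 2) / (q.2 / 2)) L (𝓝 1) :=
      tendsto_sin_div_self'.comp hhalfθ
    have h2 := h1.div_const 2
    refine h2.congr fun q => ?_
    rcases eq_or_ne q.2 0 with h | h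
    · simp [h]
    · field_simp
  -- ℓ/sin(ℓ/2) → 2
  have hhalfℓ : Tendsto (fun q : ℝ × ℝ => q.1 / 2) L (𝓝[≠] 0) := by
    refine tendsto_nhdsWithin_iff.mpr ⟨by simpa using hfst.div_const 2, ?_⟩
    filter_upwards [hmem] with q hq
    have h : (0:ℝ) < q.1 / 2 := by linarith [hq.1]
    exact h.ne'
  have hsℓ : Tendsto (fun q : ℝ × ℝ => q.1 / Real.sin (q.1 / 2)) L (𝓝 2) := by
    have h1 : Tendsto (fun q : ℝ × ℝ => Real.sin (q.1 / 2) / (q.1 / 2)) L (𝓝 1) :=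
      tendsto_sin_div_self'.comp hhalfℓ
    have h2 : Tendsto (fun q : ℝ × ℝ => (Real.sin (q.1 / 2) / (q.1 / 2))⁻¹) L (𝓝 1) := by
      simpa using h1.inv₀ one_ne_zero
    have h3 := h2.const_mul (2 : ℝ)
    rw [mul_one] at h3
    refine h3.congr fun q => ?_
    rw [inv_div]
    ring
  -- cos(θ/2)⁻¹ → 1
  have hcθ : Tendsto (fun q : ℝ × ℝ => (Real.cos (q.2 / 2))⁻¹) L (𝓝 1) := by
    have hc : ContinuousAt (fun q : ℝ × ℝ => (Real.cos (q.2 / 2))⁻¹) ((0, 0) : ℝ × ℝ) := by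
      apply ContinuousAt.inv₀
      · fun_prop
      · norm_num
    have h := hc.tendsto.mono_left
      (nhdsWithin_le_nhds (s := {q : ℝ × ℝ | 0 < q.1 ∧ 0 < q.2}))
    simpa using h
  -- ℓ/(cos(θ/2)·sin(ℓ/2)) → 2
  have hbase2 : Tendsto (fun q : ℝ × ℝ => q.1 / (Real.cos (q.2 / 2) * Real.sin (q.1 / 2)))
      L (𝓝 2) := by
    have h := hsℓ.mul hcθ
    rw [mul_one] at h
    refine h.congr fun q => ?_
    field_simp
  -- rpow factors
  have hpow1 : Tendsto (fun q : ℝ × ℝ => (Real.sin (q.2 / 2) / q.2) ^ p) L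
      (𝓝 ((1 / 2 : ℝ) ^ p)) :=
    (Real.continuousAt_rpow_const (1 / 2) p (Or.inl (by norm_num))).tendsto.comp hsθ
  have hpow2 : Tendsto
      (fun q : ℝ × ℝ => (q.1 / (Real.cos (q.2 / 2) * Real.sin (q.1 / 2))) ^ (p - 1)) L
      (𝓝 ((2 : ℝ) ^ (p - 1))) :=
    (Real.continuousAt_rpow_const 2 (p - 1) (Or.inl (by norm_num))).tendsto.comp hbase2
  -- the reorganized function
  have hG : Tendsto
      (fun q : ℝ × ℝ => 2 * (Real.arctan (x q) / x q) *
        (Real.cos (q.2 / 2) * Real.cos (q.1 / 2))⁻¹ * (Real.sin (q.2 / 2) / q.2) ^ p *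
        (q.1 / (Real.cos (q.2 / 2) * Real.sin (q.1 / 2))) ^ (p - 1)) L
      (𝓝 (2 * 1 * 1 * (1 / 2 : ℝ) ^ p * (2 : ℝ) ^ (p - 1))) :=
    (((tendsto_const_nhds.mul h_arctan).mul hcc).mul hpow1).mul hpow2
  have hval : 2 * 1 * 1 * (1 / 2 : ℝ) ^ p * (2 : ℝ) ^ (p - 1) = 1 := by
    have h1 : (1 / 2 : ℝ) ^ p = ((2 : ℝ) ^ p)⁻¹ := by
      rw [one_div, Real.inv_rpow (by norm_num)]
    have h2 : (2 : ℝ) ^ (p - 1) = (2 : ℝ) ^ p / 2 ^ (1 : ℝ) := Real.rpow_sub (by norm_num) p 1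
    have h3 : (0 : ℝ) < (2 : ℝ) ^ p := Real.rpow_pos_of_pos (by norm_num) p
    rw [h1, h2, Real.rpow_one]
    field_simp
  rw [hval] at hG
  refine hG.congr' ?_
  -- eventual equality
  filter_upwards [hmem, hpos] with q hq hq'
  obtain ⟨hℓ, hθ⟩ := hq
  obtain ⟨ha, hb, hc, hd, hΨ⟩ := hq'
  have hθp : (0 : ℝ) < q.2 ^ p := Real.rpow_pos_of_pos hθ p
  have hℓp : (0 : ℝ) < q.1 ^ (p - 1) := Real.rpow_pos_of_pos hℓ (p - 1)
  have hbcp : (0 : ℝ) < (Real.cos (q.2 / 2) * Real.sin (q.1 / 2)) ^ (p - 1) :=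
    Real.rpow_pos_of_pos (mul_pos hb hc) (p - 1)
  simp only [sphericalF, hxdef]
  rw [Real.div_rpow ha.le hθ.le, Real.div_rpow hℓ.le (mul_pos hb hc).le,
    show (1 : ℝ) - p = -(p - 1) by ring, Real.rpow_neg hℓ.le]
  have hap : (0 : ℝ) < Real.sin (q.2 / 2) ^ p := Real.rpow_pos_of_pos ha p
  field_simp
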